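/- Let W : 𝕋² × [0,L] → ℝ³ be a C² vector field on Ω = 𝕋² × [0,L] satisfying ∇×W = 0 and ∇·W = 0 in Ω, with W₃ = 0 on both boundary components 𝕋²×{0} and 𝕋²×{L}, and with zero fluxes ∫_{x=0} W·dS = 0 and ∫_{y=0} W·dS = 0. Then W ≡ 0 in Ω. -/

import Mathlib

/-!
Curl-free and divergence-free give `ΔW₃ = ∂₁(∂₃W₁) + ∂₂(∂₃W₂) - ∂₃(∂₁W₁ + ∂₂W₂) = 0`, so `W₃` is
harmonic, periodic in the horizontal variables and zero on the top and bottom: by the maximum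
principle (applied to `W₃ + ε z²`, whose maximum over the slab is attained thanks to periodicity)
`W₃ ≡ 0`. The curl equations then make `W₁, W₂` independent of `z`, and on a horizontal plane
`W₁ - i W₂` satisfies the Cauchy–Riemann equations, so it is a bounded entire function, hence
constant by Liouville. A constant horizontal field has flux `2πL · W₁` resp. `2πL · W₂`.
-/

open Real MeasureTheory

/-- Partial derivative in the `i`-th coordinate direction on `ℝ³ = Fin 3 → ℝ`. -/
noncomputable def pd3 (i : Fin 3) (f : (Fin 3 → ℝ) → ℝ) (x : Fin 3 → ℝ) : ℝ :=
  fderiv ℝ f x (Pi.single i 1)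

open Function Filter Topology

theorem IsLocalMax.deriv_deriv_nonpos {g : ℝ → ℝ} {a : ℝ} (h : IsLocalMax g a)
    (hg : ContinuousAt g a) : deriv (deriv g) a ≤ 0 := by
  by_contra! hpos
  -- a positive second derivative makes `a` also a local minimum, so `g` is locally constant
  have hconst : g =ᶠ[𝓝 a] fun _ => g a :=
    (h.and (isLocalMin_of_deriv_deriv_pos hpos h.deriv_eq_zero hg)).mono
      fun _ hy => le_antisymm hy.1 hy.2
  have : deriv g =ᶠ[𝓝 a] fun _ => 0 :=
    hconst.eventuallyEq_nhds.mono fun _ hy => by rw [hy.deriv_eq, deriv_const]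
  simp [this.deriv_eq] at hpos

namespace DivCurl

variable {f g : (Fin 3 → ℝ) → ℝ} {x : Fin 3 → ℝ} {i j : Fin 3}

section PartialDerivatives

theorem hasDerivAt_pd3 {t : ℝ} (hf : DifferentiableAt ℝ f (update x i t)) :
    HasDerivAt (fun s => f (update x i s)) (pd3 i f (update x i t)) t :=
  hf.hasFDerivAt.comp_hasDerivAt t (hasDerivAt_update x i t)

theorem pd3_eq_deriv (hf : DifferentiableAt ℝ f x) :
    pd3 i f x = deriv (fun s => f (update x i s)) (x i) := by
  rw [← update_eq_self i x] at hf
  simpa using (hasDerivAt_pd3 hf).deriv.symm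

theorem pd3_eq_zero_of_forall_update_eq (hf : DifferentiableAt ℝ f x)
    (h : ∀ s, f (update x i s) = f x) : pd3 i f x = 0 := by
  rw [pd3_eq_deriv hf, funext h, deriv_const]

theorem pd3_congr_of_eventuallyEq (h : f =ᶠ[𝓝 x] g) : pd3 i f x = pd3 i g x := by
  rw [pd3, pd3, h.fderiv_eq]

theorem pd3_eq_zero_of_eventually_eq_zero (h : ∀ᶠ y in 𝓝 x, f y = 0) : pd3 i f x = 0 := by
  rw [pd3_congr_of_eventuallyEq (g := fun _ => 0) h, pd3, fderiv_const_apply]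
  rfl

theorem pd3_neg : pd3 i (fun y => -f y) = fun y => -pd3 i f y := by
  ext y; simp [pd3]

theorem pd3_add (hf : DifferentiableAt ℝ f x) (hg : DifferentiableAt ℝ g x) :
    pd3 i (fun y => f y + g y) x = pd3 i f x + pd3 i g x := by
  simp [pd3, fderiv_fun_add hf hg]

theorem contDiff_pd3 {n : WithTop ℕ∞} (hf : ContDiff ℝ (n + 1) f) : ContDiff ℝ n (pd3 i f) :=
  (hf.fderiv_right le_rfl).clm_apply contDiff_const

theorem differentiable_pd3 (hf : ContDiff ℝ 2 f) : Differentiable ℝ (pd3 i f) :=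
  (contDiff_pd3 (n := 1) hf).differentiable one_ne_zero

theorem pd3_pd3_eq_fderiv_fderiv (hf : ContDiff ℝ 2 f) :
    pd3 i (pd3 j f) x = fderiv ℝ (fderiv ℝ f) x (Pi.single i 1) (Pi.single j 1) := by
  have h1 : DifferentiableAt ℝ (fderiv ℝ f) x :=
    ((hf.fderiv_right (m := 1) (by norm_num)).differentiable one_ne_zero) x
  change fderiv ℝ (fun y => fderiv ℝ f y (Pi.single j 1)) x (Pi.single i 1) = _
  simp [fderiv_clm_apply h1 (differentiableAt_const _)]

theorem pd3_comm (hf : ContDiff ℝ 2 f) : pd3 i (pd3 j f) x = pd3 j (pd3 i f) x := by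
  rw [pd3_pd3_eq_fderiv_fderiv hf, pd3_pd3_eq_fderiv_fderiv hf,
    hf.contDiffAt.isSymmSndFDerivAt (by simp)]

theorem pd3_pd3_eq_deriv_deriv (hf : ContDiff ℝ 2 f) :
    pd3 i (pd3 i f) x = deriv (deriv fun s => f (update x i s)) (x i) := by
  have hderiv : deriv (fun s => f (update x i s)) = fun s => pd3 i f (update x i s) :=
    funext fun s => (hasDerivAt_pd3 ((hf.differentiable two_ne_zero) _)).deriv
  rw [pd3_eq_deriv (differentiable_pd3 hf x), hderiv]

theorem pd3_pd3_nonpos_of_isLocalMax (hf : ContDiff ℝ 2 f) (h : IsLocalMax f x) (i : Fin 3) :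
    pd3 i (pd3 i f) x ≤ 0 := by
  have hline : Continuous (update x i) := continuous_const.update i continuous_id
  rw [pd3_pd3_eq_deriv_deriv hf]
  refine IsLocalMax.deriv_deriv_nonpos ?_ (hf.continuous.comp hline).continuousAt
  exact (update_eq_self i x).symm ▸ h |>.comp_continuous hline.continuousAt

theorem apply_update_eq_of_pd3_eq_zero (hf : Differentiable ℝ f) {a b t : ℝ}
    (h : ∀ y, y i ∈ Set.Icc a b → pd3 i f y = 0) (hx : x i ∈ Set.Icc a b)
    (ht : t ∈ Set.Icc a b) : f (update x i t) = f x := by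
  have hconst := constant_of_has_deriv_right_zero (f := fun s => f (update x i s))
    (hf.continuous.comp (continuous_const.update i continuous_id)).continuousOn
    fun s hs => by
      have := hasDerivAt_pd3 (hf (update x i s))
      rw [h _ (by simpa using Set.Ico_subset_Icc_self hs)] at this
      exact this.hasDerivWithinAt
  simpa using (hconst t ht).trans (hconst (x i) hx).symm

end PartialDerivatives

section Laplacian

noncomputable def lap3 (f : (Fin 3 → ℝ) → ℝ) (x : Fin 3 → ℝ) : ℝ :=
  pd3 0 (pd3 0 f) x + pd3 1 (pd3 1 f) x + pd3 2 (pd3 2 f) x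

theorem lap3_neg : lap3 (fun y => -f y) x = -lap3 f x := by
  simp only [lap3, pd3_neg]; ring

theorem lap3_add (hf : ContDiff ℝ 2 f) (hg : ContDiff ℝ 2 g) :
    lap3 (fun y => f y + g y) x = lap3 f x + lap3 g x := by
  have hpd (i : Fin 3) : pd3 i (fun y => f y + g y) = fun y => pd3 i f y + pd3 i g y :=
    funext fun y => pd3_add (hf.differentiable two_ne_zero y) (hg.differentiable two_ne_zero y)
  simp only [lap3, hpd, pd3_add (differentiable_pd3 hf x) (differentiable_pd3 hg x)]
  ring

theorem lap3_mul_sq_apply_two (ε : ℝ) : lap3 (fun y => ε * y 2 ^ 2) x = 2 * ε := by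
  have hq : ContDiff ℝ 2 (fun y : Fin 3 → ℝ => ε * y 2 ^ 2) := by fun_prop
  simp only [lap3, pd3_pd3_eq_deriv_deriv hq]
  simp
  ring

end Laplacian

section Slab

def slab (L : ℝ) : Set (Fin 3 → ℝ) := {x | x 2 ∈ Set.Icc 0 L}

def CurlFreeOn (W : (Fin 3 → ℝ) → Fin 3 → ℝ) (s : Set (Fin 3 → ℝ)) : Prop :=
  ∀ x ∈ s, pd3 1 (W · 2) x - pd3 2 (W · 1) x = 0 ∧ pd3 2 (W · 0) x - pd3 0 (W · 2) x = 0 ∧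
    pd3 0 (W · 1) x - pd3 1 (W · 0) x = 0

def DivFreeOn (W : (Fin 3 → ℝ) → Fin 3 → ℝ) (s : Set (Fin 3 → ℝ)) : Prop :=
  ∀ x ∈ s, pd3 0 (W · 0) x + pd3 1 (W · 1) x + pd3 2 (W · 2) x = 0

variable {p L : ℝ}

theorem slab_mem_nhds (hx : x 2 ∈ Set.Ioo 0 L) : slab L ∈ 𝓝 x :=
  mem_of_superset ((isOpen_Ioo.preimage (continuous_apply 2)).mem_nhds hx)
    fun _ hy => Set.Ioo_subset_Icc_self hy

theorem update_add_single (x : Fin 3 → ℝ) (i : Fin 3) (t p : ℝ) :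
    update x i (t + p) = update x i t + Pi.single i p := by
  ext j; by_cases h : j = i <;> simp [h]

theorem exists_update_mem_Ico_of_periodic (hp : 0 < p)
    (h : ∀ x, f (x + Pi.single i p) = f x) (x : Fin 3 → ℝ) :
    ∃ t ∈ Set.Ico 0 p, f (update x i t) = f x := by
  have hper : Periodic (fun t => f (update x i t)) p := fun t => by
    simp only [update_add_single, h]
  obtain ⟨t, ht, hft⟩ := hper.exists_mem_Ico₀ hp (x i)
  exact ⟨t, ht, by simpa using hft.symm⟩

theorem exists_isMaxOn_of_periodic (hp : 0 < p) (hf : Continuous f)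
    (h0 : ∀ x, f (x + Pi.single 0 p) = f x) (h1 : ∀ x, f (x + Pi.single 1 p) = f x)
    {K : Set ℝ} (hK : IsCompact K) (hne : K.Nonempty) :
    ∃ x₀, x₀ 2 ∈ K ∧ IsMaxOn f {x | x 2 ∈ K} x₀ := by
  set B : Set (Fin 3 → ℝ) := Set.univ.pi ![Set.Icc 0 p, Set.Icc 0 p, K]
  have hB : IsCompact B := isCompact_univ_pi fun i => by
    fin_cases i
    exacts [isCompact_Icc, isCompact_Icc, hK]
  have hmemB {y : Fin 3 → ℝ} : y ∈ B ↔ y 0 ∈ Set.Icc 0 p ∧ y 1 ∈ Set.Icc 0 p ∧ y 2 ∈ K := by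
    simp [B, Fin.forall_fin_succ]
  have hreduce : ∀ x, x 2 ∈ K → ∃ y ∈ B, f y = f x := by
    intro x hx
    obtain ⟨t₀, ht₀, hf₀⟩ := exists_update_mem_Ico_of_periodic hp h0 x
    obtain ⟨t₁, ht₁, hf₁⟩ := exists_update_mem_Ico_of_periodic hp h1 (update x 0 t₀)
    refine ⟨update (update x 0 t₀) 1 t₁, hmemB.2 ?_, hf₁.trans hf₀⟩
    simpa using ⟨Set.Ico_subset_Icc_self ht₀, Set.Ico_subset_Icc_self ht₁, hx⟩
  obtain ⟨k, hk⟩ := hne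
  obtain ⟨y, hyB, -⟩ := hreduce (Pi.single 2 k) (by simpa using hk)
  obtain ⟨x₀, hx₀, hmax⟩ := hB.exists_isMaxOn ⟨y, hyB⟩ hf.continuousOn
  refine ⟨x₀, (hmemB.1 hx₀).2.2, isMaxOn_iff.2 fun x hx => ?_⟩
  obtain ⟨y, hy, hyx⟩ := hreduce x hx
  exact hyx ▸ isMaxOn_iff.1 hmax y hy

end Slab

section MaximumPrinciple

variable {p L : ℝ}

theorem exists_isMaxOn_slab_of_lap3_pos (hp : 0 < p) (hf : ContDiff ℝ 2 f)
    (h0 : ∀ x, f (x + Pi.single 0 p) = f x) (h1 : ∀ x, f (x + Pi.single 1 p) = f x)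
    (hL : 0 ≤ L) (hlap : ∀ x, x 2 ∈ Set.Ioo 0 L → 0 < lap3 f x) :
    ∃ x₀, (x₀ 2 = 0 ∨ x₀ 2 = L) ∧ IsMaxOn f (slab L) x₀ := by
  obtain ⟨x₀, hx₀, hmax⟩ :=
    exists_isMaxOn_of_periodic hp hf.continuous h0 h1 isCompact_Icc (Set.nonempty_Icc.2 hL)
  refine ⟨x₀, ?_, hmax⟩
  by_contra! hne
  have hint : x₀ 2 ∈ Set.Ioo 0 L := ⟨hx₀.1.lt_of_ne hne.1.symm, hx₀.2.lt_of_ne hne.2⟩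
  have hpos := hlap x₀ hint
  have hnonpos := pd3_pd3_nonpos_of_isLocalMax hf (hmax.isLocalMax (slab_mem_nhds hint))
  rw [lap3] at hpos
  linarith [hnonpos 0, hnonpos 1, hnonpos 2]

theorem nonpos_of_lap3_nonneg (hp : 0 < p) (hf : ContDiff ℝ 2 f)
    (h0 : ∀ x, f (x + Pi.single 0 p) = f x) (h1 : ∀ x, f (x + Pi.single 1 p) = f x)
    (hlap : ∀ x, x 2 ∈ Set.Ioo 0 L → 0 ≤ lap3 f x)
    (hbdry : ∀ x, x 2 = 0 ∨ x 2 = L → f x ≤ 0) (hx : x ∈ slab L) : f x ≤ 0 := by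
  refine le_of_forall_pos_le_add fun δ hδ => ?_
  set ε := δ / (L ^ 2 + 1)
  have hε : 0 < ε := by positivity
  have hq : ContDiff ℝ 2 fun y : Fin 3 → ℝ => ε * y 2 ^ 2 := by fun_prop
  obtain ⟨x₀, hx₀, hmax⟩ := exists_isMaxOn_slab_of_lap3_pos (f := fun y => f y + ε * y 2 ^ 2)
    hp (hf.add hq) (fun y => by simp [h0]) (fun y => by simp [h1]) (hx.1.trans hx.2)
    fun y hy => by
      rw [lap3_add hf hq, lap3_mul_sq_apply_two]
      linarith [hlap y hy]
  have hfx : f x + ε * x 2 ^ 2 ≤ f x₀ + ε * x₀ 2 ^ 2 := hmax hx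
  have hfx₀ : f x₀ + ε * x₀ 2 ^ 2 ≤ ε * L ^ 2 := by
    rcases hx₀ with h | h <;> simp only [h] <;> nlinarith [hbdry x₀ (by simp [h])]
  have hεL : ε * L ^ 2 ≤ δ := by
    rw [div_mul_eq_mul_div, div_le_iff₀ (by positivity)]; nlinarith
  nlinarith

theorem eq_zero_of_lap3_eq_zero (hp : 0 < p) (hf : ContDiff ℝ 2 f)
    (h0 : ∀ x, f (x + Pi.single 0 p) = f x) (h1 : ∀ x, f (x + Pi.single 1 p) = f x)
    (hlap : ∀ x, x 2 ∈ Set.Ioo 0 L → lap3 f x = 0)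
    (hbdry : ∀ x, x 2 = 0 ∨ x 2 = L → f x = 0) (hx : x ∈ slab L) : f x = 0 := by
  have hle := nonpos_of_lap3_nonneg hp hf h0 h1 (fun y hy => (hlap y hy).ge)
    (fun y hy => (hbdry y hy).le) hx
  have hge := nonpos_of_lap3_nonneg (f := fun y => -f y) hp hf.neg (by simp [h0]) (by simp [h1])
    (fun y hy => by rw [lap3_neg, hlap y hy, neg_zero]) (fun y hy => by simp [hbdry y hy]) hx
  linarith

end MaximumPrinciple

section Plane

open Complex

noncomputable def planeCLM : ℂ →L[ℝ] Fin 3 → ℝ :=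
  reCLM.smulRight (Pi.single 0 1) + imCLM.smulRight (Pi.single 1 1)

@[simp] theorem planeCLM_apply (ζ : ℂ) : planeCLM ζ = ![ζ.re, ζ.im, 0] := by
  ext j; fin_cases j <;> simp [planeCLM]

noncomputable def planeEmbed (c : ℝ) (ζ : ℂ) : Fin 3 → ℝ := planeCLM ζ + Pi.single 2 c

@[simp] theorem planeEmbed_apply_two (c : ℝ) (ζ : ℂ) : planeEmbed c ζ 2 = c := by
  simp [planeEmbed]

theorem planeEmbed_zero (c : ℝ) : planeEmbed c 0 = Pi.single 2 c := by
  ext j; fin_cases j <;> simp [planeEmbed]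

theorem planeEmbed_re_add_im (x : Fin 3 → ℝ) : planeEmbed (x 2) (x 0 + x 1 * I) = x := by
  ext j; fin_cases j <;> simp [planeEmbed]

theorem hasFDerivAt_comp_planeEmbed (hf : Differentiable ℝ f) (c : ℝ) (ζ : ℂ) :
    HasFDerivAt (fun ζ => f (planeEmbed c ζ)) ((fderiv ℝ f (planeEmbed c ζ)).comp planeCLM) ζ :=
  (hf _).hasFDerivAt.comp ζ (planeCLM.hasFDerivAt.add_const _)

theorem planeCLM_one : planeCLM 1 = Pi.single 0 1 := by ext j; fin_cases j <;> simp

theorem planeCLM_I : planeCLM I = Pi.single 1 1 := by ext j; fin_cases j <;> simp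

variable {W : (Fin 3 → ℝ) → Fin 3 → ℝ} {p c : ℝ}

theorem differentiable_complex_of_div_curl (hW : Differentiable ℝ W)
    (hdiv : ∀ x, x 2 = c → pd3 0 (W · 0) x + pd3 1 (W · 1) x = 0)
    (hcurl : ∀ x, x 2 = c → pd3 0 (W · 1) x = pd3 1 (W · 0) x) :
    Differentiable ℂ fun ζ => (W (planeEmbed c ζ) 0 : ℂ) - I * W (planeEmbed c ζ) 1 := by
  intro ζ
  have hcomp (k : Fin 3) := ofRealCLM.hasFDerivAt.comp ζ
    (hasFDerivAt_comp_planeEmbed ((differentiable_pi.mp hW) k) c ζ)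
  refine ((hcomp 0).sub ((hcomp 1).const_mul I)).complexOfReal_hasFDerivAt ?_ |>.differentiableAt
  have hdivζ := congrArg ofReal (hdiv _ (planeEmbed_apply_two c ζ))
  have hcurlζ := congrArg ofReal (hcurl _ (planeEmbed_apply_two c ζ))
  simp only [pd3, ofReal_add, ofReal_zero] at hdivζ hcurlζ
  simp only [sub_apply, smul_apply, ContinuousLinearMap.comp_apply, ofRealCLM_apply, smul_eq_mul,
    planeCLM_one, planeCLM_I]
  linear_combination -hcurlζ + (-I) * hdivζ
    + (fderiv ℝ (W · 1) (planeEmbed c ζ) (Pi.single 0 1) : ℂ) * I_sq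

theorem eq_on_plane_of_div_curl (hp : 0 < p) (hW : Differentiable ℝ W)
    (h0 : ∀ x, W (x + Pi.single 0 p) = W x) (h1 : ∀ x, W (x + Pi.single 1 p) = W x)
    (hdiv : ∀ x, x 2 = c → pd3 0 (W · 0) x + pd3 1 (W · 1) x = 0)
    (hcurl : ∀ x, x 2 = c → pd3 0 (W · 1) x = pd3 1 (W · 0) x) (hx : x 2 = c) :
    W x 0 = W (Pi.single 2 c) 0 ∧ W x 1 = W (Pi.single 2 c) 1 := by
  set Ψ : (Fin 3 → ℝ) → ℂ := fun y => (W y 0 : ℂ) - I * W y 1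
  have hΨ : Continuous fun y => ‖Ψ y‖ := by
    have := continuous_pi_iff.mp hW.continuous
    fun_prop
  obtain ⟨x₀, -, hmax⟩ := exists_isMaxOn_of_periodic hp hΨ (by simp [Ψ, h0]) (by simp [Ψ, h1])
    isCompact_singleton (Set.singleton_nonempty c)
  have hbdd : Bornology.IsBounded (Set.range (Ψ ∘ planeEmbed c)) :=
    isBounded_iff_forall_norm_le.2 ⟨‖Ψ x₀‖, by
      rintro _ ⟨ζ, rfl⟩
      exact hmax (planeEmbed_apply_two c ζ)⟩
  have hconst := (differentiable_complex_of_div_curl hW hdiv hcurl).apply_eq_apply_of_bounded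
    hbdd (x 0 + x 1 * I) 0
  subst hx
  rw [planeEmbed_re_add_im, planeEmbed_zero] at hconst
  have hre := congrArg re hconst
  have him := congrArg im hconst
  simp at hre him
  exact ⟨hre, him⟩

end Plane

section DivCurlSystem

variable {W : (Fin 3 → ℝ) → Fin 3 → ℝ} {s : Set (Fin 3 → ℝ)} {p L : ℝ}

theorem lap3_apply_two_eq_zero (hW : ContDiff ℝ 2 W) (hcurl : CurlFreeOn W s)
    (hdiv : DivFreeOn W s) (hs : s ∈ 𝓝 x) : lap3 (W · 2) x = 0 := by
  have hWc (k : Fin 3) : ContDiff ℝ 2 (W · k) := contDiff_pi.mp hW k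
  have hcurl0 : pd3 2 (W · 0) =ᶠ[𝓝 x] pd3 0 (W · 2) :=
    eventually_of_mem hs fun y hy => by linarith [(hcurl y hy).2.1]
  have hcurl1 : pd3 2 (W · 1) =ᶠ[𝓝 x] pd3 1 (W · 2) :=
    eventually_of_mem hs fun y hy => by linarith [(hcurl y hy).1]
  have hdiv' : pd3 2 (W · 2) =ᶠ[𝓝 x] fun y => -(pd3 0 (W · 0) y + pd3 1 (W · 1) y) :=
    eventually_of_mem hs fun y hy => by linarith [hdiv y hy]
  have h22 : pd3 2 (pd3 2 (W · 2)) x = -(pd3 2 (pd3 0 (W · 0)) x + pd3 2 (pd3 1 (W · 1)) x) := by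
    simp only [pd3_congr_of_eventuallyEq hdiv', pd3_neg,
      pd3_add (differentiable_pd3 (hWc 0) x) (differentiable_pd3 (hWc 1) x)]
  rw [lap3, h22, ← pd3_congr_of_eventuallyEq hcurl0, ← pd3_congr_of_eventuallyEq hcurl1,
    pd3_comm (hWc 0), pd3_comm (hWc 1)]
  ring

theorem apply_two_eq_zero_of_div_curl (hp : 0 < p) (hW : ContDiff ℝ 2 W)
    (h0 : ∀ x, W (x + Pi.single 0 p) = W x) (h1 : ∀ x, W (x + Pi.single 1 p) = W x)
    (hcurl : CurlFreeOn W (slab L)) (hdiv : DivFreeOn W (slab L))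
    (hbdry : ∀ x, x 2 = 0 ∨ x 2 = L → W x 2 = 0) (hx : x ∈ slab L) : W x 2 = 0 :=
  eq_zero_of_lap3_eq_zero hp (contDiff_pi.mp hW 2) (fun y => congrFun (h0 y) 2)
    (fun y => congrFun (h1 y) 2)
    (fun _ hy => lap3_apply_two_eq_zero hW hcurl hdiv (slab_mem_nhds hy)) hbdry hx

theorem apply_eq_of_div_curl (hp : 0 < p) (hL : 0 < L) (hW : Differentiable ℝ W)
    (h0 : ∀ x, W (x + Pi.single 0 p) = W x) (h1 : ∀ x, W (x + Pi.single 1 p) = W x)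
    (hcurl : CurlFreeOn W (slab L)) (hdiv : DivFreeOn W (slab L))
    (hW2 : ∀ x ∈ slab L, W x 2 = 0) (hx : x ∈ slab L) :
    W x 0 = W (Pi.single 2 (L / 2)) 0 ∧ W x 1 = W (Pi.single 2 (L / 2)) 1 := by
  have hWc (k : Fin 3) : Differentiable ℝ (W · k) := differentiable_pi.mp hW k
  have hdW2 (i : Fin 3) (hi : i ≠ 2) (y) (hy : y ∈ slab L) : pd3 i (W · 2) y = 0 :=
    pd3_eq_zero_of_forall_update_eq (hWc 2 y) fun t => by
      rw [hW2 y hy, hW2 _ (by simpa [slab, update_of_ne hi.symm] using hy)]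
  have hvert0 (y) (hy : y ∈ slab L) : pd3 2 (W · 0) y = 0 := by
    linarith [(hcurl y hy).2.1, hdW2 0 (by decide) y hy]
  have hvert1 (y) (hy : y ∈ slab L) : pd3 2 (W · 1) y = 0 := by
    linarith [(hcurl y hy).1, hdW2 1 (by decide) y hy]
  have hmid : L / 2 ∈ Set.Ioo 0 L := ⟨by linarith, by linarith⟩
  have hmid' : L / 2 ∈ Set.Icc 0 L := Set.Ioo_subset_Icc_self hmid
  have hplane := eq_on_plane_of_div_curl hp hW h0 h1 (c := L / 2)
    (fun y hy => by
      linarith [hdiv y (show y 2 ∈ _ from hy ▸ hmid'),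
        pd3_eq_zero_of_eventually_eq_zero (i := 2) (eventually_of_mem (slab_mem_nhds (hy ▸ hmid)) hW2)])
    (fun y hy => by linarith [(hcurl y (show y 2 ∈ _ from hy ▸ hmid')).2.2])
    (x := update x 2 (L / 2)) (by simp)
  rwa [apply_update_eq_of_pd3_eq_zero (hWc 0) hvert0 hx hmid',
    apply_update_eq_of_pd3_eq_zero (hWc 1) hvert1 hx hmid'] at hplane

end DivCurlSystem

theorem eq_zero_of_integral_integral_eq_zero {g : ℝ → ℝ → ℝ} {a p L : ℝ} (hp : 0 < p)
    (hL : 0 < L) (hg : ∀ y ∈ Set.Icc 0 p, ∀ z ∈ Set.Icc 0 L, g y z = a)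
    (h : ∫ z in (0 : ℝ)..L, ∫ y in (0 : ℝ)..p, g y z = 0) : a = 0 := by
  have hinner : ∀ z ∈ Set.uIcc 0 L, ∫ y in (0 : ℝ)..p, g y z = p * a := fun z hz => by
    rw [intervalIntegral.integral_congr (g := fun _ => a)
      fun y hy => hg y (Set.uIcc_of_le hp.le ▸ hy) z (Set.uIcc_of_le hL.le ▸ hz)]
    simp
  rw [intervalIntegral.integral_congr hinner] at h
  simpa [hp.ne', hL.ne'] using h

end DivCurl

open DivCurl

/-- Uniqueness for the div-curl system on `𝕋² × [0,L]`: a `C²` vector field that is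
curl-free and divergence-free in the slab, `2π`-periodic in the first two variables,
with vanishing third component on the top and bottom boundaries and vanishing fluxes
through the cross-sections `{x = 0}` and `{y = 0}`, is identically zero on the slab. -/
theorem stmt_11 (L : ℝ) (hL : 0 < L) (W : (Fin 3 → ℝ) → (Fin 3 → ℝ))
    (hW : ContDiff ℝ 2 W)
    (hper0 : ∀ x : Fin 3 → ℝ, W (x + Pi.single 0 (2 * π)) = W x)
    (hper1 : ∀ x : Fin 3 → ℝ, W (x + Pi.single 1 (2 * π)) = W x)
    (hcurl : ∀ x : Fin 3 → ℝ, x 2 ∈ Set.Icc 0 L →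
      pd3 1 (fun y => W y 2) x - pd3 2 (fun y => W y 1) x = 0 ∧
      pd3 2 (fun y => W y 0) x - pd3 0 (fun y => W y 2) x = 0 ∧
      pd3 0 (fun y => W y 1) x - pd3 1 (fun y => W y 0) x = 0)
    (hdiv : ∀ x : Fin 3 → ℝ, x 2 ∈ Set.Icc 0 L →
      pd3 0 (fun y => W y 0) x + pd3 1 (fun y => W y 1) x + pd3 2 (fun y => W y 2) x = 0)
    (hbot : ∀ x : Fin 3 → ℝ, x 2 = 0 → W x 2 = 0)
    (htop : ∀ x : Fin 3 → ℝ, x 2 = L → W x 2 = 0)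
    (hflux1 : (∫ z in (0:ℝ)..L, ∫ y in (0:ℝ)..(2 * π), W ![0, y, z] 0) = 0)
    (hflux2 : (∫ z in (0:ℝ)..L, ∫ x in (0:ℝ)..(2 * π), W ![x, 0, z] 1) = 0) :
    ∀ x : Fin 3 → ℝ, x 2 ∈ Set.Icc 0 L → W x = 0 := by
  have hW2 (x) (hx : x ∈ slab L) : W x 2 = 0 :=
    apply_two_eq_zero_of_div_curl two_pi_pos hW hper0 hper1 hcurl hdiv
      (fun y hy => hy.elim (hbot y) (htop y)) hx
  have hconst (x) (hx : x ∈ slab L) :=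
    apply_eq_of_div_curl two_pi_pos hL (hW.differentiable two_ne_zero) hper0 hper1 hcurl hdiv hW2 hx
  have ha0 := eq_zero_of_integral_integral_eq_zero two_pi_pos hL
    (fun y _ z hz => (hconst ![0, y, z] hz).1) hflux1
  have ha1 := eq_zero_of_integral_integral_eq_zero two_pi_pos hL
    (fun y _ z hz => (hconst ![y, 0, z] hz).2) hflux2
  intro x hx
  ext j
  fin_cases j
  · simpa [ha0] using (hconst x hx).1
  · simpa [ha1] using (hconst x hx).2
  · simpa using hW2 x hx
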